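/- arXiv:2501.11419 — 2 statements merged into one kernel-verified Lean document; each statement's English description precedes it below -/
import Mathlib

section
/- Dijkstra-style greedy correctness for consistent fees: let G = (V,E) be a finite directed graph with consistent, nonnegative fee functions f_e on arcs, source t, and initial amount a ≥ 0. Define d(v) as the infimum over paths p from t to v of the accumulated amount c(p,a) (d(t) = a, d(v) = ∞ if no path exists). Then d satisfies the Bellman equations: for every vertex v ≠ t reachable from t, d(v) = min over arcs (u,v) ∈ E of d(u) + f_{(u,v)}(d(u)). -/
/-!
Since `x ↦ x + f_e x` is monotone, so is the amount accumulated along a fixed path as a function of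
the starting amount, and it never decreases along the way. Hence cutting a cycle out of a path does
not increase its cost, the infimum defining `d v` may be taken over the finitely many simple paths,
and it is attained. Appending the arc `(u, v)` to an optimal path to `u` gives
`d v ≤ d u + f (d u)`; conversely every path to `v ≠ t` ends with an arc `(u, v)` whose prefix costs
at least `d u`, and monotonicity of `x ↦ x + f x` gives the reverse inequality.
-/

open NNReal ENNReal

/-- A path in a directed graph, given as the list of its vertices. -/
def IsVPath {V : Type*} (Adj : V → V → Prop) (t v : V) (p : List V) : Prop :=
  p.Chain' Adj ∧ p.head? = some t ∧ p.getLast? = some v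

/-- The accumulated amount computed forward along a vertex list. -/
def vcost {V : Type*} (fee : V → V → ℝ≥0 → ℝ≥0) : List V → ℝ≥0 → ℝ≥0
  | [], a => a
  | [_], a => a
  | u :: v :: rest, a => vcost fee (v :: rest) (a + fee u v a)

theorem List.exists_eq_append_cons_append_cons_of_not_nodup {α : Type*} :
    ∀ {l : List α}, ¬l.Nodup → ∃ l₁ x l₂ l₃, l = l₁ ++ x :: (l₂ ++ x :: l₃)
  | [], h => absurd List.nodup_nil h
  | y :: l, h => by
    by_cases hy : y ∈ l
    · obtain ⟨l₂, l₃, rfl⟩ := List.append_of_mem hy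
      exact ⟨[], y, l₂, l₃, rfl⟩
    · obtain ⟨l₁, x, l₂, l₃, rfl⟩ :=
        exists_eq_append_cons_append_cons_of_not_nodup fun hl => h (List.nodup_cons.2 ⟨hy, hl⟩)
      exact ⟨y :: l₁, x, l₂, l₃, rfl⟩

theorem isVPath_iff {V : Type*} {Adj : V → V → Prop} {t v : V} {p : List V} :
    IsVPath Adj t v p ↔ p.IsChain Adj ∧ p.head? = some t ∧ p.getLast? = some v :=
  Iff.rfl

namespace IsVPath

variable {V : Type*} {Adj : V → V → Prop} {t v : V}

theorem append_cons_iff {l₁ l₂ : List V} {x : V} :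
    IsVPath Adj t v (l₁ ++ x :: l₂) ↔ IsVPath Adj t x (l₁ ++ [x]) ∧ IsVPath Adj x v (x :: l₂) := by
  have head_eq : (l₁ ++ x :: l₂).head? = (l₁ ++ [x]).head? := by cases l₁ <;> rfl
  simp only [isVPath_iff]
  rw [List.isChain_split, List.getLast?_append_cons, head_eq, List.getLast?_concat]
  simp only [List.head?_cons, true_and, and_true]
  tauto

theorem eq_concat {p : List V} (hp : IsVPath Adj t v p) : ∃ q, p = q ++ [v] := by
  rcases p.eq_nil_or_concat' with rfl | ⟨q, w, rfl⟩
  · simp [isVPath_iff] at hp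
  · obtain rfl : w = v := by simpa using hp.2.2
    exact ⟨q, rfl⟩

theorem exists_penultimate {p : List V} (hp : IsVPath Adj t v p) (hvt : v ≠ t) :
    ∃ q u, IsVPath Adj t u (q ++ [u]) ∧ Adj u v ∧ p = q ++ [u, v] := by
  obtain ⟨q, rfl⟩ := hp.eq_concat
  rcases q.eq_nil_or_concat' with rfl | ⟨q, u, rfl⟩
  · exact absurd (by simpa using (isVPath_iff.1 hp).2.1) hvt
  · rw [List.append_assoc, List.singleton_append, append_cons_iff] at hp
    exact ⟨q, u, hp.1, by simpa using (isVPath_iff.1 hp.2).1, by simp⟩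

theorem shortcut {l₁ l₂ l₃ : List V} {x : V} (hp : IsVPath Adj t v (l₁ ++ x :: (l₂ ++ x :: l₃))) :
    IsVPath Adj t v (l₁ ++ x :: l₃) := by
  obtain ⟨hpre, hsuf⟩ := append_cons_iff.1 hp
  rw [← List.cons_append] at hsuf
  exact append_cons_iff.2 ⟨hpre, (append_cons_iff.1 hsuf).2⟩

end IsVPath

section vcost

variable {V : Type*} (fee : V → V → ℝ≥0 → ℝ≥0)

theorem le_vcost : ∀ (p : List V) (a : ℝ≥0), a ≤ vcost fee p a
  | [], _ | [_], _ => le_rfl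
  | _ :: v :: rest, _ => le_self_add.trans (le_vcost (v :: rest) _)

theorem vcost_append_cons : ∀ (l₁ : List V) (x : V) (l₂ : List V) (a : ℝ≥0),
    vcost fee (l₁ ++ x :: l₂) a = vcost fee (x :: l₂) (vcost fee (l₁ ++ [x]) a)
  | [], _, _, _ | [_], _, _, _ => rfl
  | u :: w :: l₁, x, l₂, a => vcost_append_cons (w :: l₁) x l₂ (a + fee u w a)

theorem vcost_append_pair (q : List V) (u v : V) (a : ℝ≥0) :
    vcost fee (q ++ [u, v]) a = vcost fee (q ++ [u]) a + fee u v (vcost fee (q ++ [u]) a) :=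
  vcost_append_cons fee q u [v] a

variable {fee} (hfee : ∀ u v, Monotone fun x => x + fee u v x)
include hfee

theorem vcost_mono : ∀ p : List V, Monotone (vcost fee p)
  | [] | [_] => monotone_id
  | u :: v :: rest => (vcost_mono (v :: rest)).comp (hfee u v)

theorem vcost_shortcut_le (l₁ l₂ l₃ : List V) (x : V) (a : ℝ≥0) :
    vcost fee (l₁ ++ x :: l₃) a ≤ vcost fee (l₁ ++ x :: (l₂ ++ x :: l₃)) a := by
  rw [vcost_append_cons fee l₁ x l₃, vcost_append_cons fee l₁ x (l₂ ++ x :: l₃),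
    ← List.cons_append, vcost_append_cons fee (x :: l₂) x l₃]
  exact vcost_mono hfee _ (le_vcost fee _ _)

end vcost

section minCost

variable {V : Type*} (Adj : V → V → Prop) (fee : V → V → ℝ≥0 → ℝ≥0) (t : V) (a : ℝ≥0)

noncomputable def minCost (v : V) : ℝ≥0∞ :=
  ⨅ p ∈ {p : List V | IsVPath Adj t v p}, ((vcost fee p a : ℝ≥0) : ℝ≥0∞)

variable {Adj fee t a}

theorem minCost_le {v : V} {p : List V} (hp : IsVPath Adj t v p) :
    minCost Adj fee t a v ≤ vcost fee p a :=
  iInf₂_le p hp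

theorem exists_isVPath_of_minCost_ne_top {v : V} (h : minCost Adj fee t a v ≠ ⊤) :
    ∃ p, IsVPath Adj t v p := by
  by_contra! hno
  exact h (iInf₂_eq_top.2 fun p hp => absurd hp (hno p))

variable (hfee : ∀ u v, Monotone fun x => x + fee u v x)
include hfee

theorem IsVPath.exists_nodup_vcost_le {v : V} {p : List V} (hp : IsVPath Adj t v p) :
    ∃ q, IsVPath Adj t v q ∧ q.Nodup ∧ vcost fee q a ≤ vcost fee p a := by
  induction h : p.length using Nat.strong_induction_on generalizing p with
  | _ n ih =>
  by_cases hnd : p.Nodup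
  · exact ⟨p, hp, hnd, le_rfl⟩
  obtain ⟨l₁, x, l₂, l₃, rfl⟩ := List.exists_eq_append_cons_append_cons_of_not_nodup hnd
  have hlt : (l₁ ++ x :: l₃).length < n := by simp [← h]
  obtain ⟨q, hq, hqnd, hle⟩ := ih _ hlt hp.shortcut rfl
  exact ⟨q, hq, hqnd, hle.trans (vcost_shortcut_le hfee l₁ l₂ l₃ x a)⟩

theorem exists_minCost_eq [Fintype V] {v : V} (h : ∃ p, IsVPath Adj t v p) :
    ∃ p, IsVPath Adj t v p ∧ minCost Adj fee t a v = vcost fee p a := by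
  set simplePaths := {q : List V | IsVPath Adj t v q ∧ q.Nodup}
  have hfin : simplePaths.Finite :=
    (List.finite_length_le V (Fintype.card V)).subset fun q hq => hq.2.length_le_card
  have hne : simplePaths.Nonempty := by
    obtain ⟨p, hp⟩ := h
    obtain ⟨q, hq, hqnd, -⟩ := hp.exists_nodup_vcost_le hfee (a := a)
    exact ⟨q, hq, hqnd⟩
  obtain ⟨q, ⟨hq, -⟩, hmin⟩ := Set.exists_min_image simplePaths (vcost fee · a) hfin hne
  refine ⟨q, hq, le_antisymm (minCost_le hq) (le_iInf₂ fun p hp => ?_)⟩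
  obtain ⟨p', hp', hp'nd, hle⟩ := hp.exists_nodup_vcost_le hfee (a := a)
  exact ENNReal.coe_le_coe.2 ((hmin p' ⟨hp', hp'nd⟩).trans hle)

theorem minCost_le_add_fee [Fintype V] {u v : V} (huv : Adj u v) :
    minCost Adj fee t a v ≤ minCost Adj fee t a u + fee u v (minCost Adj fee t a u).toNNReal := by
  by_cases htop : minCost Adj fee t a u = ⊤
  · simp [htop]
  obtain ⟨p, hp, hcost⟩ := exists_minCost_eq hfee (exists_isVPath_of_minCost_ne_top htop)
  obtain ⟨q, rfl⟩ := hp.eq_concat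
  have hpath : IsVPath Adj t v (q ++ [u, v]) :=
    IsVPath.append_cons_iff.2 ⟨hp, isVPath_iff.2 ⟨List.isChain_pair.2 huv, rfl, rfl⟩⟩
  calc minCost Adj fee t a v ≤ vcost fee (q ++ [u, v]) a := minCost_le hpath
    _ = minCost Adj fee t a u + fee u v (minCost Adj fee t a u).toNNReal := by
      rw [hcost, ENNReal.toNNReal_coe, vcost_append_pair, ENNReal.coe_add]

theorem exists_add_fee_minCost_le {v : V} (hvt : v ≠ t) {p : List V} (hp : IsVPath Adj t v p) :
    ∃ u, Adj u v ∧
      minCost Adj fee t a u + fee u v (minCost Adj fee t a u).toNNReal ≤ vcost fee p a := by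
  obtain ⟨q, u, hq, huv, rfl⟩ := hp.exists_penultimate hvt
  have hle := minCost_le (fee := fee) (a := a) hq
  refine ⟨u, huv, ?_⟩
  generalize minCost Adj fee t a u = m at hle ⊢
  lift m to ℝ≥0 using ne_top_of_le_ne_top ENNReal.coe_ne_top hle
  rw [ENNReal.toNNReal_coe, vcost_append_pair]
  exact_mod_cast hfee u v (ENNReal.coe_le_coe.1 hle)

end minCost

/-- Bellman equations for the lowest accumulated cost function `d` in a finite
directed graph with consistent fee functions: for every vertex `v ≠ t`
reachable from `t`, `d v` equals the minimum over in-arcs `(u,v)` of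
`d u + f_{(u,v)}(d u)`. -/
theorem bellman_equations (V : Type*) [Fintype V] (Adj : V → V → Prop)
    (fee : V → V → ℝ≥0 → ℝ≥0)
    (hfee : ∀ u v, ∀ x y : ℝ≥0, x ≤ y → x + fee u v x ≤ y + fee u v y)
    (t : V) (a : ℝ≥0)
    (d : V → ℝ≥0∞)
    (hd : ∀ v, d v = ⨅ p ∈ {p : List V | IsVPath Adj t v p},
      ((vcost fee p a : ℝ≥0) : ℝ≥0∞)) :
    ∀ v, v ≠ t → (∃ p, IsVPath Adj t v p) →
      d v = ⨅ u ∈ {u | Adj u v}, (d u + (fee u v (d u).toNNReal : ℝ≥0∞)) := by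
  obtain rfl : d = minCost Adj fee t a := funext hd
  have hmono : ∀ u v, Monotone fun x => x + fee u v x := fun u v x y => hfee u v x y
  rintro v hvt -
  refine le_antisymm (le_iInf₂ fun u huv => minCost_le_add_fee hmono huv) (le_iInf₂ fun p hp => ?_)
  obtain ⟨u, huv, hle⟩ := exists_add_fee_minCost_le hmono hvt hp
  exact (iInf₂_le u huv).trans hle
end

section
/- Early-termination correctness of the partial bidirectional search: let G = (V,E) be a finite directed graph with consistent nonnegative fee functions, and suppose every arc out of the source s has zero fee (f_{(s,v)} ≡ 0 for all arcs (s,v)). Working in the transpose graph, if v minimizes d(v) := min over paths from t to v of the accumulated cost, among all vertices v with an arc (v,s) in the transpose (i.e., (s,v) ∈ E), then appending the arc (v,s) to a lowest-fee path from t to v yields a lowest-fee path from t to s, provided that for every such in-neighbour u of s the final arc has zero fee. -/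
open NNReal

/-!
A path from `t` to `s ≠ t` ends with an arc `(u, s)`, so it is a path from `t` to an
in-neighbour `u` of `s` followed by that arc. Arcs into `s` carry zero fee, so the cost of
such a path is that of its prefix, which is at least the cost of `p` by minimality; and the
cost of `p ++ [s]` is exactly the cost of `p`.
-/

section

variable {V : Type*}

theorem vcost_append_singleton (fee : V → V → ℝ≥0 → ℝ≥0) :
    ∀ {l : List V} {v : V}, l.getLast? = some v → ∀ w a,
      vcost fee (l ++ [w]) a = vcost fee l a + fee v w (vcost fee l a)
  | [], _, h, _, _ => by simp at h
  | [_], _, h, _, _ => by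
      obtain rfl := Option.some.inj h
      simp [vcost]
  | x :: y :: rest, _, h, w, a => by
      simpa [vcost] using
        vcost_append_singleton fee (l := y :: rest) (by simpa using h) w (a + fee x y a)

theorem vcost_append_singleton_of_fee_eq_zero (fee : V → V → ℝ≥0 → ℝ≥0) {l : List V}
    {v w : V} (hl : l.getLast? = some v) (hfee : ∀ x, fee v w x = 0) (a : ℝ≥0) :
    vcost fee (l ++ [w]) a = vcost fee l a := by
  rw [vcost_append_singleton fee hl, hfee, add_zero]

namespace IsVPath

variable {Adj : V → V → Prop} {t u v : V} {p : List V}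

theorem append_singleton (hp : IsVPath Adj t v p) (huv : Adj v u) :
    IsVPath Adj t u (p ++ [u]) := by
  obtain ⟨hchain, hhead, hlast⟩ := hp
  refine ⟨List.isChain_append.mpr ⟨hchain, List.isChain_singleton u, ?_⟩, ?_, by simp⟩
  · simp [hlast, huv]
  · simp [List.head?_append, hhead]

theorem exists_eq_append_singleton {s : V} (hq : IsVPath Adj t s p) (hts : t ≠ s) :
    ∃ u q, Adj u s ∧ IsVPath Adj t u q ∧ p = q ++ [s] := by
  obtain ⟨hchain, hhead, hlast⟩ := hq
  rcases p.eq_nil_or_concat' with rfl | ⟨q, b, rfl⟩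
  · simp at hhead
  obtain rfl : b = s := by simpa using hlast
  rcases q.eq_nil_or_concat' with rfl | ⟨r, u, rfl⟩
  · exact absurd (by simpa using hhead.symm) hts
  obtain ⟨hchain', -, hadj⟩ := List.isChain_append.mp hchain
  refine ⟨u, r ++ [u], by simpa using hadj, ⟨hchain', ?_, by simp⟩, rfl⟩
  simpa [List.head?_append] using hhead

end IsVPath

end

theorem partial_bidirectional_early_termination_general (V : Type*)
    (Adj : V → V → Prop) (fee : V → V → ℝ≥0 → ℝ≥0)
    (t s v : V) (hts : t ≠ s) (a : ℝ≥0)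
    (hzero : ∀ u, Adj u s → ∀ x, fee u s x = 0)
    (hvs : Adj v s) (p : List V) (hp : IsVPath Adj t v p)
    (hmin : ∀ u, Adj u s → ∀ q, IsVPath Adj t u q →
      vcost fee p a ≤ vcost fee q a) :
    IsVPath Adj t s (p ++ [s]) ∧
      ∀ q, IsVPath Adj t s q → vcost fee (p ++ [s]) a ≤ vcost fee q a := by
  refine ⟨hp.append_singleton hvs, fun q hq => ?_⟩
  obtain ⟨u, r, hus, hr, rfl⟩ := hq.exists_eq_append_singleton hts
  rw [vcost_append_singleton_of_fee_eq_zero fee hp.2.2 (hzero v hvs),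
    vcost_append_singleton_of_fee_eq_zero fee hr.2.2 (hzero u hus)]
  exact hmin u hus r hr

/-- Early-termination correctness of the partial bidirectional search (in the
transpose graph): if every arc into `s` has zero fee and `v` is an in-neighbour
of `s` whose lowest-fee path `p` from `t` has accumulated cost at most that of
every path from `t` to any in-neighbour of `s`, then appending the arc `(v,s)`
to `p` yields a lowest-fee path from `t` to `s`. -/
theorem partial_bidirectional_early_termination (V : Type*) [Fintype V]
    (Adj : V → V → Prop) (fee : V → V → ℝ≥0 → ℝ≥0)
    (hfee : ∀ u v, ∀ x y : ℝ≥0, x ≤ y → x + fee u v x ≤ y + fee u v y)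
    (t s v : V) (hts : t ≠ s) (a : ℝ≥0)
    (hzero : ∀ u, Adj u s → ∀ x, fee u s x = 0)
    (hvs : Adj v s) (p : List V) (hp : IsVPath Adj t v p)
    (hmin : ∀ u, Adj u s → ∀ q, IsVPath Adj t u q →
      vcost fee p a ≤ vcost fee q a) :
    IsVPath Adj t s (p ++ [s]) ∧
      ∀ q, IsVPath Adj t s q → vcost fee (p ++ [s]) a ≤ vcost fee q a :=
  partial_bidirectional_early_termination_general V Adj fee t s v hts a hzero hvs p hp hmin
end
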